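/- arXiv:2109.00530 — 2 statements merged into one kernel-verified Lean document; each statement's English description precedes it below -/
import Mathlib

section
/- Let x ∈ ℝ^n have nondecreasing coordinates. For any permutation π of {1,…,n}, let S_π = {p ∈ ℝ^n : p_{π(i)} ≤ p_{π(i+1)} for all i} and let x^π be the mirror of x defined by (x^π)_{π(i)} = x_i. Then d₂(x, S_π) ≤ ‖x - x^π‖₂ ≤ 2·d₂(x, S_π), where d₂(x, S_π) = inf_{p ∈ S_π} ‖x - p‖₂. -/
/-!
By the rearrangement inequality, pairing the sorted coordinates of `x` with the coordinates of
any `p ∈ S_π` in the order prescribed by `π` maximises the inner product, so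
`⟪x, p⟫ ≤ ⟪x^π, p⟫`. As `‖x^π‖ = ‖x‖`, this says `‖x^π - p‖ ≤ ‖x - p‖`, and the triangle
inequality through `p` gives `‖x - x^π‖ ≤ 2 ‖x - p‖`. The lower bound holds because
`x^π ∈ S_π`.
-/

/-- The mirror of `x` in the cell of the permutation `π`, defined by `(x^π)_{π(i)} = x_i`. -/
noncomputable def mirror {n : ℕ} (x : EuclideanSpace ℝ (Fin n)) (π : Equiv.Perm (Fin n)) :
    EuclideanSpace ℝ (Fin n) :=
  WithLp.toLp 2 (fun i => x (π.symm i))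

/-- The cell `S_π = {p : p_{π(1)} ≤ ⋯ ≤ p_{π(n)}}`. -/
def cell {n : ℕ} (π : Equiv.Perm (Fin n)) : Set (EuclideanSpace ℝ (Fin n)) :=
  {p | Monotone fun i => p (π i)}

section

variable {n : ℕ}

theorem mirror_apply_apply (x : EuclideanSpace ℝ (Fin n)) (π : Equiv.Perm (Fin n)) (i : Fin n) :
    mirror x π (π i) = x i := by
  simp [mirror]

theorem mirror_mem_cell {x : EuclideanSpace ℝ (Fin n)} {π : Equiv.Perm (Fin n)}
    (hx : Monotone fun i => x i) : mirror x π ∈ cell π := by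
  simpa [cell, mirror_apply_apply] using hx

theorem norm_mirror (x : EuclideanSpace ℝ (Fin n)) (π : Equiv.Perm (Fin n)) :
    ‖mirror x π‖ = ‖x‖ := by
  simp only [EuclideanSpace.norm_eq, ← Equiv.sum_comp π (fun i => ‖mirror x π i‖ ^ 2),
    mirror_apply_apply]

theorem inner_le_inner_mirror {x p : EuclideanSpace ℝ (Fin n)} {π : Equiv.Perm (Fin n)}
    (hx : Monotone fun i => x i) (hp : p ∈ cell π) :
    inner ℝ x p ≤ inner ℝ (mirror x π) p := by
  have hmirror : inner ℝ (mirror x π) p = ∑ i, x i * p (π i) := by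
    rw [PiLp.inner_apply, ← Equiv.sum_comp π]
    simp [mirror_apply_apply, mul_comm]
  have hx_inner : inner ℝ x p = ∑ i, x i * p (π (π.symm i)) := by
    simp [PiLp.inner_apply, mul_comm]
  rw [hmirror, hx_inner]
  exact (hx.monovary hp).sum_mul_comp_perm_le_sum_mul

theorem norm_mirror_sub_le {x p : EuclideanSpace ℝ (Fin n)} {π : Equiv.Perm (Fin n)}
    (hx : Monotone fun i => x i) (hp : p ∈ cell π) :
    ‖mirror x π - p‖ ≤ ‖x - p‖ := by
  refine (sq_le_sq₀ (norm_nonneg _) (norm_nonneg _)).1 ?_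
  rw [norm_sub_sq_real, norm_sub_sq_real, norm_mirror]
  linarith [inner_le_inner_mirror hx hp]

end

theorem stmt5 {n : ℕ} (x : EuclideanSpace ℝ (Fin n)) (hx : Monotone fun i => x i)
    (π : Equiv.Perm (Fin n)) :
    Metric.infDist x (cell π) ≤ ‖x - mirror x π‖ ∧
      ‖x - mirror x π‖ ≤ 2 * Metric.infDist x (cell π) := by
  have hmem := mirror_mem_cell (π := π) hx
  refine ⟨dist_eq_norm x _ ▸ Metric.infDist_le_dist_of_mem hmem, ?_⟩
  rw [← div_le_iff₀' two_pos, Metric.le_infDist ⟨_, hmem⟩]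
  intro p hp
  rw [div_le_iff₀' two_pos, dist_eq_norm]
  calc ‖x - mirror x π‖ ≤ ‖x - p‖ + ‖p - mirror x π‖ := norm_sub_le_norm_sub_add_norm_sub _ _ _
    _ ≤ 2 * ‖x - p‖ := by rw [norm_sub_rev p]; linarith [norm_mirror_sub_le hx hp]
end

section
/- Let f : ℝ^n → ℝ be locally Lipschitz, x ∈ ℝ^n, ε > 0, and suppose g ∈ ∂_ε f(x) is any element of the Goldstein ε-subgradient satisfying ⟨w, g⟩ ≥ ‖g‖² for all w ∈ ∂_ε f(x) (e.g., g is the minimal-norm element). Then for all 0 ≤ t ≤ ε/‖g‖ (when g ≠ 0), f(x − t g) ≤ f(x) − t ‖g‖². -/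
/-!
Along the segment `s ↦ y - s • g`, at every point where `f` is differentiable the slope is
`-⟪∇f, g⟫ ≤ -‖g‖²`, since such gradients lie in `∂_ε f(x)` as long as the point stays within `ε`
of `x`. The segment through `x` itself may avoid the differentiability points, but by Rademacher's
theorem and Fubini almost every parallel segment meets them for almost every `s`; a locally
Lipschitz function of one variable is absolutely continuous, so integrating its derivative along
such a segment gives the descent inequality there. This replaces Lebourg's mean value theorem.
Shifting the segment back to `x` and letting `t` reach `ε / ‖g‖` are continuity arguments.
-/

open Filter Topology

/-- The Goldstein ε-subgradient: the closed convex hull of all limits of gradients of `f`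
at differentiability points converging to some point within distance `ε` of `x`. -/
noncomputable def goldstein {n : ℕ} (f : EuclideanSpace ℝ (Fin n) → ℝ) (ε : ℝ)
    (x : EuclideanSpace ℝ (Fin n)) : Set (EuclideanSpace ℝ (Fin n)) :=
  closure (convexHull ℝ {g | ∃ x' : EuclideanSpace ℝ (Fin n), ‖x' - x‖ ≤ ε ∧
    ∃ u : ℕ → EuclideanSpace ℝ (Fin n),
      Tendsto u atTop (𝓝 x') ∧ (∀ i, DifferentiableAt ℝ f (u i)) ∧
      Tendsto (fun i => gradient f (u i)) atTop (𝓝 g)})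

open Set MeasureTheory

section Rademacher

variable {E F : Type*} [NormedAddCommGroup E] [NormedSpace ℝ E] [FiniteDimensional ℝ E]
  [MeasurableSpace E] [BorelSpace E] [NormedAddCommGroup F] [NormedSpace ℝ F]
  [FiniteDimensional ℝ F] (μ : Measure E) [μ.IsAddHaarMeasure] {f : E → F}

theorem LocallyLipschitz.ae_differentiableAt (hf : LocallyLipschitz f) :
    ∀ᵐ x ∂μ, DifferentiableAt ℝ f x := by
  refine measure_null_of_locally_null _ fun y _ => ?_
  obtain ⟨K, t, ht, hK⟩ := hf y
  refine ⟨_, inter_mem_nhdsWithin _ (interior_mem_nhds.2 ht), measure_mono_null ?_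
    (ae_iff.1 hK.ae_differentiableWithinAt_of_mem)⟩
  rintro z ⟨hz, hzt⟩ hdiff
  exact hz ((hdiff (interior_subset hzt)).differentiableAt (mem_interior_iff_mem_nhds.1 hzt))

theorem LocallyLipschitz.ae_ae_differentiableAt_add_smul (hf : LocallyLipschitz f) (d : E) :
    ∀ᵐ y ∂μ, ∀ᵐ s : ℝ, DifferentiableAt ℝ f (y + s • d) :=
  (ae_ae_add_linearMap_mem_iff (LinearMap.toSpanSingleton ℝ E d) volume μ
    (measurableSet_of_differentiableAt ℝ f)).2 (hf.ae_differentiableAt μ)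

end Rademacher

theorem LocallyLipschitz.sub_le_mul_of_ae_deriv_le {h : ℝ → ℝ} (hh : LocallyLipschitz h)
    {a b c : ℝ} (hab : a ≤ b) (hd : ∀ᵐ s, s ∈ Ioo a b → deriv h s ≤ c) :
    h b - h a ≤ c * (b - a) := by
  obtain ⟨K, hK⟩ := hh.locallyLipschitzOn.exists_lipschitzOnWith_of_compact
    (isCompact_uIcc (a := a) (b := b))
  have hac := hK.absolutelyContinuousOnInterval
  have hd' : ∀ᵐ s ∂volume.restrict (Icc a b), deriv h s ≤ c := by
    rw [← Measure.restrict_congr_set Ioo_ae_eq_Icc]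
    exact (ae_restrict_iff' measurableSet_Ioo).2 hd
  calc h b - h a = ∫ s in a..b, deriv h s := hac.integral_deriv_eq_sub.symm
    _ ≤ ∫ _ in a..b, c := intervalIntegral.integral_mono_ae_restrict hab
        hac.intervalIntegrable_deriv intervalIntegrable_const hd'
    _ = c * (b - a) := by simp [mul_comm]

theorem LocallyLipschitz.sub_le_mul_of_ae_fderiv_le {E : Type*} [NormedAddCommGroup E]
    [NormedSpace ℝ E] {f : E → ℝ} (hf : LocallyLipschitz f) (y d : E) {t c : ℝ} (ht : 0 ≤ t)
    (hd : ∀ᵐ s : ℝ, s ∈ Ioo 0 t →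
      DifferentiableAt ℝ f (y + s • d) ∧ fderiv ℝ f (y + s • d) d ≤ c) :
    f (y + t • d) - f y ≤ c * t := by
  have hline : LipschitzWith ‖d‖₊ fun s : ℝ => y + s • d := by
    simpa using (LipschitzWith.const y).add (ContinuousLinearMap.toSpanSingleton ℝ d).lipschitz
  have key := (hf.comp hline.locallyLipschitz).sub_le_mul_of_ae_deriv_le ht <|
    hd.mono fun s hs hst => by
      obtain ⟨hdiff, hle⟩ := hs hst
      have hline' : HasDerivAt (fun s : ℝ => y + s • d) d s := by
        simpa using ((hasDerivAt_id s).smul_const d).const_add y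
      rwa [(hdiff.hasFDerivAt.comp_hasDerivAt s hline').deriv]
  simpa using key

section Goldstein

variable {n : ℕ} {f : EuclideanSpace ℝ (Fin n) → ℝ} {ε : ℝ} {x g : EuclideanSpace ℝ (Fin n)}

theorem gradient_mem_goldstein {p : EuclideanSpace ℝ (Fin n)} (hp : DifferentiableAt ℝ f p)
    (hpx : ‖p - x‖ ≤ ε) : gradient f p ∈ goldstein f ε x :=
  subset_closure <| subset_convexHull ℝ _
    ⟨p, hpx, fun _ => p, tendsto_const_nhds, fun _ => hp, tendsto_const_nhds⟩

theorem goldstein_descent_of_ae_differentiableAt_line (hf : LocallyLipschitz f)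
    (hmin : ∀ w ∈ goldstein f ε x, ‖g‖ ^ 2 ≤ (inner ℝ w g : ℝ)) {y : EuclideanSpace ℝ (Fin n)}
    {t : ℝ} (ht : 0 ≤ t) (hy : ‖y - x‖ + t * ‖g‖ ≤ ε)
    (hline : ∀ᵐ s : ℝ, DifferentiableAt ℝ f (y + s • -g)) :
    f (y - t • g) ≤ f y - t * ‖g‖ ^ 2 := by
  have hslope : ∀ s ∈ Ioo 0 t, DifferentiableAt ℝ f (y + s • -g) →
      fderiv ℝ f (y + s • -g) (-g) ≤ -‖g‖ ^ 2 := fun s hs hdiff => by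
    have hdist : ‖y + s • -g - x‖ ≤ ε := calc
      ‖y + s • -g - x‖ = ‖(y - x) - s • g‖ := by congr 1; module
      _ ≤ ‖y - x‖ + s * ‖g‖ := by
        grw [norm_sub_le, norm_smul, Real.norm_of_nonneg hs.1.le]
      _ ≤ ε := by nlinarith [norm_nonneg g, hs.2]
    have := hmin _ (gradient_mem_goldstein hdiff hdist)
    rw [← inner_gradient_left, inner_neg_right]
    linarith
  have key := hf.sub_le_mul_of_ae_fderiv_le y (-g) ht <|
    hline.mono fun s hdiff hs => ⟨hdiff, hslope s hs hdiff⟩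
  rw [smul_neg, ← sub_eq_add_neg] at key
  linarith

theorem goldstein_descent_of_mul_norm_lt (hf : LocallyLipschitz f)
    (hmin : ∀ w ∈ goldstein f ε x, ‖g‖ ^ 2 ≤ (inner ℝ w g : ℝ)) {t : ℝ} (ht : 0 ≤ t)
    (htε : t * ‖g‖ < ε) : f (x - t • g) ≤ f x - t * ‖g‖ ^ 2 := by
  set r := ε - t * ‖g‖
  have hgood : Dense {y | ∀ᵐ s : ℝ, DifferentiableAt ℝ f (y + s • -g)} :=
    Measure.dense_of_ae (hf.ae_ae_differentiableAt_add_smul volume (-g))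
  have hclosed : IsClosed {y | f (y - t • g) ≤ f y - t * ‖g‖ ^ 2} := by
    have := hf.continuous
    exact isClosed_le (by fun_prop) (by fun_prop)
  have hball : Metric.ball x r ⊆ {y | f (y - t • g) ≤ f y - t * ‖g‖ ^ 2} := by
    refine (hgood.open_subset_closure_inter Metric.isOpen_ball).trans
      (closure_minimal (fun y ⟨hy, hyline⟩ => ?_) hclosed)
    rw [Metric.mem_ball, dist_eq_norm] at hy
    exact goldstein_descent_of_ae_differentiableAt_line hf hmin ht (by linarith) hyline
  exact hball (Metric.mem_ball_self (by linarith))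

end Goldstein

theorem stmt8_general {n : ℕ} (f : EuclideanSpace ℝ (Fin n) → ℝ) (hf : LocallyLipschitz f)
    (x : EuclideanSpace ℝ (Fin n)) (ε : ℝ) (hε : 0 < ε)
    (g : EuclideanSpace ℝ (Fin n))
    (hmin : ∀ w ∈ goldstein f ε x, ‖g‖ ^ 2 ≤ (inner ℝ w g : ℝ))
    (hg0 : g ≠ 0) :
    ∀ t : ℝ, 0 ≤ t → t ≤ ε / ‖g‖ → f (x - t • g) ≤ f x - t * ‖g‖ ^ 2 := by
  have hgpos : 0 < ‖g‖ := norm_pos_iff.mpr hg0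
  have hclosed : IsClosed {t : ℝ | f (x - t • g) ≤ f x - t * ‖g‖ ^ 2} := by
    have := hf.continuous
    exact isClosed_le (by fun_prop) (by fun_prop)
  have hIco : Ico 0 (ε / ‖g‖) ⊆ {t : ℝ | f (x - t • g) ≤ f x - t * ‖g‖ ^ 2} := fun t ht =>
    goldstein_descent_of_mul_norm_lt hf hmin ht.1 ((lt_div_iff₀ hgpos).1 ht.2)
  intro t ht htε
  have hIcc := closure_minimal hIco hclosed
  rw [closure_Ico (div_pos hε hgpos).ne] at hIcc
  exact hIcc ⟨ht, htε⟩

theorem stmt8 {n : ℕ} (f : EuclideanSpace ℝ (Fin n) → ℝ) (hf : LocallyLipschitz f)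
    (x : EuclideanSpace ℝ (Fin n)) (ε : ℝ) (hε : 0 < ε)
    (g : EuclideanSpace ℝ (Fin n)) (hg : g ∈ goldstein f ε x)
    (hmin : ∀ w ∈ goldstein f ε x, ‖g‖ ^ 2 ≤ (inner ℝ w g : ℝ))
    (hg0 : g ≠ 0) :
    ∀ t : ℝ, 0 ≤ t → t ≤ ε / ‖g‖ → f (x - t • g) ≤ f x - t * ‖g‖ ^ 2 :=
  stmt8_general f hf x ε hε g hmin hg0
end
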